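/- arXiv:1701.05879 — 3 statements merged into one kernel-verified Lean document; each statement's English description precedes it below -/
import Mathlib

section
/- Suppose n ∈ ℤ_{−ε}, so that π(ε,n) is reducible. Then π(ε,n) is completely reducible if and only if (ε,n) = (−1,0). Moreover, for (ε,n) = (−1,0), V_{−1} is the direct sum of the two subspaces span{v_j : j ≥ 1} and span{v_j : j ≤ −1}, and each of these is an irreducible submodule of π(−1,0). -/
namespace SL2Deform

/-- The index set `ℤ_ε = {j : ℤ | (-1)^j = ε}`, for a sign `ε ∈ {1, -1}`
(i.e. a unit of `ℤ`). -/
abbrev idx (ε : ℤˣ) : Type := {j : ℤ // (-1 : ℤˣ) ^ j = ε}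

/-- `V ε`: the complex vector space of finitely supported functions on `ℤ_ε`,
with standard basis `{v_j}`. -/
abbrev V (ε : ℤˣ) : Type := idx ε →₀ ℂ

/-- The standard basis vector `v_j` of `V ε`, for `j ∈ ℤ_ε`. -/
noncomputable def bv (ε : ℤˣ) (j : ℤ) (h : (-1 : ℤˣ) ^ j = ε) : V ε :=
  Finsupp.single ⟨j, h⟩ 1

lemma parity_two : (-1 : ℤˣ) ^ (2 : ℤ) = 1 := by decide
lemma parity_neg_two : (-1 : ℤˣ) ^ (-2 : ℤ) = 1 := by decide
lemma parity_zero : (-1 : ℤˣ) ^ (0 : ℤ) = 1 := by decide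

lemma parity_shift {ε : ℤˣ} {j : ℤ} (h : (-1 : ℤˣ) ^ j = ε) {s : ℤ}
    (hs : (-1 : ℤˣ) ^ s = 1) : (-1 : ℤˣ) ^ (j + s) = ε := by
  rw [zpow_add, h, hs, mul_one]

/-- If `m ∈ ℤ_{-ε}` then `m + 1 ∈ ℤ_ε`. -/
lemma parity_succ {ε : ℤˣ} {m : ℤ} (h : (-1 : ℤˣ) ^ m = -ε) :
    (-1 : ℤˣ) ^ (m + 1) = ε := by
  rw [zpow_add, h, zpow_one]
  simp

/-- If `m ∈ ℤ_{-ε}` then `m - 1 ∈ ℤ_ε`. -/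
lemma parity_pred {ε : ℤˣ} {m : ℤ} (h : (-1 : ℤˣ) ^ m = -ε) :
    (-1 : ℤˣ) ^ (m - 1) = ε := by
  rw [sub_eq_add_neg, zpow_add, h, zpow_neg, zpow_one]
  simp

/-- The linear operator on `V ε` sending `v_j` to `c j • v_{j+s}`,
for an even shift `s`. -/
noncomputable def shiftOp (ε : ℤˣ) (s : ℤ) (hs : (-1 : ℤˣ) ^ s = 1) (c : ℤ → ℂ) :
    V ε →ₗ[ℂ] V ε :=
  Finsupp.lsum ℂ fun j =>
    LinearMap.toSpanSingleton ℂ (V ε)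
      (Finsupp.single ⟨j.1 + s, parity_shift j.2 hs⟩ (c j.1))

/-- `H v_j = j • v_j`. -/
noncomputable def Hop (ε : ℤˣ) : V ε →ₗ[ℂ] V ε :=
  shiftOp ε 0 parity_zero fun j => (j : ℂ)

/-- Principal series: `E v_j = ½(ν + j + 1) • v_{j+2}`. -/
noncomputable def Eop (ε : ℤˣ) (ν : ℂ) : V ε →ₗ[ℂ] V ε :=
  shiftOp ε 2 parity_two fun j => (1 / 2 : ℂ) * (ν + j + 1)

/-- Principal series: `F v_j = ½(ν - j + 1) • v_{j-2}`. -/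
noncomputable def Fop (ε : ℤˣ) (ν : ℂ) : V ε →ₗ[ℂ] V ε :=
  shiftOp ε (-2) parity_neg_two fun j => (1 / 2 : ℂ) * (ν - j + 1)

/-- `f_m(ν) = ½ |ν²-m²|^{1/2} (ν+m)/|ν+m|` for `ν ≠ -m`, and `f_m(-m) = 0`. -/
noncomputable def fm (m : ℤ) (ν : ℂ) : ℂ :=
  if ν = -(m : ℂ) then 0
  else (1 / 2 : ℂ) * (Real.sqrt ‖ν ^ 2 - (m : ℂ) ^ 2‖ : ℝ) * (ν + m) /
    (‖ν + (m : ℂ)‖ : ℝ)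

/-- Deformed module: `E v_{m-1} = f_m(ν) • v_{m+1}`, i.e. `E v_j = f_{j+1}(ν) • v_{j+2}`. -/
noncomputable def PEop (ε : ℤˣ) (ν : ℂ) : V ε →ₗ[ℂ] V ε :=
  shiftOp ε 2 parity_two fun j => fm (j + 1) ν

/-- Deformed module: `F v_{m+1} = f_{-m}(ν) • v_{m-1}`, i.e. `F v_j = f_{-(j-1)}(ν) • v_{j-2}`. -/
noncomputable def PFop (ε : ℤˣ) (ν : ℂ) : V ε →ₗ[ℂ] V ε :=
  shiftOp ε (-2) parity_neg_two fun j => fm (1 - j) ν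

/-- The module `π'(ε,ν)`: `E v_{m-1} = ½(ν - |m|) • v_{m+1}`,
i.e. `E v_j = ½(ν - |j+1|) • v_{j+2}`. -/
noncomputable def E'op (ε : ℤˣ) (ν : ℂ) : V ε →ₗ[ℂ] V ε :=
  shiftOp ε 2 parity_two fun j => (1 / 2 : ℂ) * (ν - ((|j + 1| : ℤ) : ℂ))

/-- The module `π'(ε,ν)`: `F v_{m+1} = ½(ν + |m|) • v_{m-1}`,
i.e. `F v_j = ½(ν + |j-1|) • v_{j-2}`. -/
noncomputable def F'op (ε : ℤˣ) (ν : ℂ) : V ε →ₗ[ℂ] V ε :=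
  shiftOp ε (-2) parity_neg_two fun j => (1 / 2 : ℂ) * (ν + ((|j - 1| : ℤ) : ℂ))

/-- `ν ∈ ℤ_{-ε}`: `ν` is an integer with `(-1)^ν = -ε`. -/
def inZminus (ε : ℤˣ) (ν : ℂ) : Prop :=
  ∃ n : ℤ, ν = (n : ℂ) ∧ (-1 : ℤˣ) ^ n = -ε

section ModuleNotions

variable {M : Type*} [AddCommGroup M] [Module ℂ M]
variable {N : Type*} [AddCommGroup N] [Module ℂ N]

/-- `W` is a submodule for the module with operators `A, B, C`: it is invariant
under all three operators. -/
def Invariant (A B C : M →ₗ[ℂ] M) (W : Submodule ℂ M) : Prop :=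
  (∀ x ∈ W, A x ∈ W) ∧ (∀ x ∈ W, B x ∈ W) ∧ (∀ x ∈ W, C x ∈ W)

/-- The module with operators `A, B, C` is irreducible: its only submodules are
`0` and the whole space. -/
def IsIrreducibleRep (A B C : M →ₗ[ℂ] M) : Prop :=
  ∀ W : Submodule ℂ M, Invariant A B C W → W = ⊥ ∨ W = ⊤

/-- `W` is an irreducible submodule: invariant, nonzero, and with no nonzero
proper invariant subspace. -/
def IsIrreducibleSubmodule (A B C : M →ₗ[ℂ] M) (W : Submodule ℂ M) : Prop :=
  Invariant A B C W ∧ W ≠ ⊥ ∧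
    ∀ U : Submodule ℂ M, Invariant A B C U → U ≤ W → U = ⊥ ∨ U = W

/-- The module with operators `A, B, C` is completely reducible: every invariant
subspace has an invariant complement. -/
def CompletelyReducible (A B C : M →ₗ[ℂ] M) : Prop :=
  ∀ W : Submodule ℂ M, Invariant A B C W →
    ∃ U : Submodule ℂ M, Invariant A B C U ∧ IsCompl W U

/-- The two modules (given by operator triples) are isomorphic. -/
def Intertwined (A B C : M →ₗ[ℂ] M) (A' B' C' : N →ₗ[ℂ] N) : Prop :=
  ∃ e : M ≃ₗ[ℂ] N, (∀ x, e (A x) = A' (e x)) ∧ (∀ x, e (B x) = B' (e x)) ∧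
    (∀ x, e (C x) = C' (e x))

/-- An invariant Hermitian form for the module with operators `A, B, C`
(`A` playing the role of `H`, `B` of `E`, `C` of `F`): a sesquilinear form,
conjugate-symmetric, with `⟨Hv,w⟩ = ⟨v,Hw⟩`, `⟨Ev,w⟩ + ⟨v,Fw⟩ = 0`,
`⟨Fv,w⟩ + ⟨v,Ew⟩ = 0`. -/
structure IsInvHermForm (A B C : M →ₗ[ℂ] M) (Φ : M → M → ℂ) : Prop where
  add_left : ∀ u v w, Φ (u + v) w = Φ u w + Φ v w
  smul_left : ∀ (a : ℂ) (v w : M), Φ (a • v) w = a * Φ v w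
  conj_symm : ∀ v w, Φ w v = (starRingEnd ℂ) (Φ v w)
  inv_A : ∀ v w, Φ (A v) w = Φ v (A w)
  inv_BC : ∀ v w, Φ (B v) w + Φ v (C w) = 0
  inv_CB : ∀ v w, Φ (C v) w + Φ v (B w) = 0

end ModuleNotions

/-- `span{v_j : j ≥ n}`. -/
noncomputable def spanGE (ε : ℤˣ) (n : ℤ) : Submodule ℂ (V ε) :=
  Submodule.span ℂ {x : V ε | ∃ j : idx ε, n ≤ j.1 ∧ x = Finsupp.single j 1}

/-- `span{v_j : j ≤ n}`. -/
noncomputable def spanLE (ε : ℤˣ) (n : ℤ) : Submodule ℂ (V ε) :=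
  Submodule.span ℂ {x : V ε | ∃ j : idx ε, j.1 ≤ n ∧ x = Finsupp.single j 1}

/-- `span{v_j : |j| ≤ n}`. -/
noncomputable def spanAbsLE (ε : ℤˣ) (n : ℤ) : Submodule ℂ (V ε) :=
  Submodule.span ℂ {x : V ε | ∃ j : idx ε, |j.1| ≤ n ∧ x = Finsupp.single j 1}

/-- The diagonal operator `S v_j = c j • v_j`. -/
noncomputable def diagMap (ε : ℤˣ) (c : idx ε → ℂ) : V ε →ₗ[ℂ] V ε :=
  Finsupp.lsum ℂ fun j => LinearMap.toSpanSingleton ℂ (V ε) (Finsupp.single j (c j))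

/-!
`H` acts diagonally with pairwise distinct eigenvalues `j` on the basis `v_j`, so every submodule is
spanned by the basis vectors it contains. `E` and `F` send `v_j` to multiples of `v_{j+2}` and
`v_{j-2}` whose coefficients `½(n + j + 1)` and `½(n - j + 1)` vanish only at `j = -n - 1` and
`j = n + 1`. Hence `span{v_j : j ≥ n + 1}` is a submodule; a complement of it must contain `v_{n-1}`
and hence `E v_{n-1} = n v_{n+1}`, which lies in that span, so `n = 0`. For `(ε, n) = (-1, 0)`
the only broken links are between `v_{-1}` and `v_1`, so the submodules are exactly `0`, `V`,
`span{v_j : j ≥ 1}` and `span{v_j : j ≤ -1}`; complete reducibility and irreducibility of both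
halves follow.
-/

open Finsupp Polynomial

section DiagonalOperator

variable {K α : Type*} [Field K] {f : (α →₀ K) →ₗ[K] (α →₀ K)} {μ : α → K}
  {W : Submodule K (α →₀ K)}

theorem single_mem_of_apply_ne_zero (hμ : Function.Injective μ)
    (hf : ∀ a, f (single a 1) = μ a • single a 1) (hW : ∀ x ∈ W, f x ∈ W)
    {x : α →₀ K} (hx : x ∈ W) {a : α} (ha : x a ≠ 0) : single a 1 ∈ W := by
  classical
  -- `p(f)` kills every coordinate of `x` except the `a`-th one
  set p : K[X] := ∏ b ∈ x.support.erase a, (X - C (μ b))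
  have hp_eval {b : α} (hb : b ∈ x.support) (hba : b ≠ a) : p.eval (μ b) = 0 := by
    rw [eval_prod]
    exact Finset.prod_eq_zero (Finset.mem_erase.2 ⟨hba, hb⟩) (by simp)
  have hp_ne : p.eval (μ a) ≠ 0 := by
    rw [eval_prod, Finset.prod_ne_zero_iff]
    intro b hb
    simpa [sub_eq_zero] using hμ.ne (Finset.ne_of_mem_erase hb).symm
  have hproj : aeval f p x = (p.eval (μ a) * x a) • single a 1 := by
    have hterm (b : α) (c : K) : aeval f p (single b c) = (p.eval (μ b) * c) • single b 1 := by
      rw [← smul_single_one, map_smul, Module.End.aeval_apply_of_mem_apply_eq_smul (hf b),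
        smul_smul, mul_comm]
    conv_lhs => rw [← x.sum_single]
    rw [Finsupp.sum, map_sum, Finset.sum_eq_single a]
    · exact hterm a (x a)
    · intro b hb hba
      rw [hterm, hp_eval hb hba, zero_mul, zero_smul]
    · intro ha'
      exact absurd (Finsupp.mem_support_iff.2 ha) ha'
  have := aeval_apply_smul_mem_of_le_comap hx p f hW
  rwa [hproj, W.smul_mem_iff (mul_ne_zero hp_ne ha)] at this

theorem eq_supported_setOf_single_mem (hμ : Function.Injective μ)
    (hf : ∀ a, f (single a 1) = μ a • single a 1) (hW : ∀ x ∈ W, f x ∈ W) :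
    W = supported K K {a | single a 1 ∈ W} := by
  refine le_antisymm (fun x hx a ha => ?_) ?_
  · exact single_mem_of_apply_ne_zero hμ hf hW hx (Finsupp.mem_support_iff.1 ha)
  · rw [supported_eq_span_single, Submodule.span_le]
    rintro _ ⟨a, ha, rfl⟩
    exact ha

end DiagonalOperator

theorem isCompl_supported_iff {R M α : Type*} [Semiring R] [AddCommMonoid M] [Module R M]
    [Nontrivial M] {s t : Set α} :
    IsCompl (supported M R s) (supported M R t) ↔ IsCompl s t :=
  ⟨fun h => ⟨disjoint_supported_supported_iff.1 h.1, codisjoint_supported_supported_iff.1 h.2⟩,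
    fun h => ⟨disjoint_supported_supported h.1, codisjoint_supported_supported h.2⟩⟩

theorem supported_ne_bot {R α : Type*} [Semiring R] [Nontrivial R] {s : Set α}
    (hs : s.Nonempty) : supported R R s ≠ ⊥ :=
  (Submodule.ne_bot_iff _).2
    ⟨single hs.some 1, single_mem_supported R 1 hs.some_mem, single_ne_zero.2 one_ne_zero⟩

section Lattice

variable {M : Type*} [AddCommGroup M] [Module ℂ M] {A B C : M →ₗ[ℂ] M} {P Q : Submodule ℂ M}

theorem invariant_bot : Invariant A B C ⊥ := by
  refine ⟨?_, ?_, ?_⟩ <;> simp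

theorem invariant_top : Invariant A B C ⊤ := by
  refine ⟨?_, ?_, ?_⟩ <;> simp

theorem completelyReducible_of_forall_invariant
    (hcl : ∀ W, Invariant A B C W → W = ⊥ ∨ W = ⊤ ∨ W = P ∨ W = Q)
    (hP : Invariant A B C P) (hQ : Invariant A B C Q) (hPQ : IsCompl P Q) :
    CompletelyReducible A B C := by
  intro W hW
  rcases hcl W hW with rfl | rfl | rfl | rfl
  · exact ⟨⊤, invariant_top, isCompl_bot_top⟩
  · exact ⟨⊥, invariant_bot, isCompl_top_bot⟩
  · exact ⟨Q, hQ, hPQ⟩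
  · exact ⟨P, hP, hPQ.symm⟩

theorem isIrreducibleSubmodule_of_forall_invariant
    (hcl : ∀ W, Invariant A B C W → W = ⊥ ∨ W = ⊤ ∨ W = P ∨ W = Q)
    (hP : Invariant A B C P) (hPQ : IsCompl P Q) (hP0 : P ≠ ⊥) (hQ0 : Q ≠ ⊥) :
    IsIrreducibleSubmodule A B C P := by
  refine ⟨hP, hP0, fun U hU hUP => ?_⟩
  have hQP : ¬ Q ≤ P := fun h => hQ0 (hPQ.disjoint.eq_bot_of_ge h)
  rcases hcl U hU with rfl | rfl | rfl | rfl
  · exact Or.inl rfl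
  · exact absurd (le_top.trans hUP) hQP
  · exact Or.inr rfl
  · exact absurd hUP hQP

end Lattice

section Operators

variable {ε : ℤˣ}

theorem shiftOp_single {s : ℤ} (hs : (-1 : ℤˣ) ^ s = 1) (c : ℤ → ℂ) {j k : idx ε}
    (hjk : k.1 = j.1 + s) : shiftOp ε s hs c (single j 1) = c j.1 • single k 1 := by
  obtain rfl : k = ⟨j.1 + s, parity_shift j.2 hs⟩ := Subtype.ext hjk
  simp [shiftOp]

theorem Hop_single (j : idx ε) : Hop ε (single j 1) = (j.1 : ℂ) • single j 1 :=
  shiftOp_single _ _ (add_zero _).symm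

theorem Eop_single (ν : ℂ) {j k : idx ε} (hjk : k.1 = j.1 + 2) :
    Eop ε ν (single j 1) = (1 / 2 * (ν + j.1 + 1)) • single k 1 :=
  shiftOp_single _ _ hjk

theorem Fop_single (ν : ℂ) {j k : idx ε} (hjk : k.1 = j.1 + 2) :
    Fop ε ν (single k 1) = (1 / 2 * (ν - k.1 + 1)) • single j 1 :=
  shiftOp_single _ _ (by omega)

theorem eq_supported_of_Hop_invariant {W : Submodule ℂ (V ε)} (hW : ∀ x ∈ W, Hop ε x ∈ W) :
    W = supported ℂ ℂ {j | single j 1 ∈ W} :=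
  eq_supported_setOf_single_mem (Int.cast_injective.comp Subtype.val_injective) Hop_single hW

theorem shiftOp_mem_supported {s : ℤ} {hs : (-1 : ℤˣ) ^ s = 1} {c : ℤ → ℂ} {S : Set (idx ε)}
    (hS : ∀ j k : idx ε, k.1 = j.1 + s → j ∈ S → c j.1 ≠ 0 → k ∈ S) {x : V ε}
    (hx : x ∈ supported ℂ ℂ S) : shiftOp ε s hs c x ∈ supported ℂ ℂ S := by
  rw [supported_eq_span_single] at hx
  refine (Submodule.map_span_le _ _ _).2 ?_ (Submodule.mem_map_of_mem hx)
  rintro _ ⟨j, hj, rfl⟩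
  let k : idx ε := ⟨j.1 + s, parity_shift j.2 hs⟩
  rw [shiftOp_single hs c (k := k) rfl]
  by_cases hc : c j.1 = 0
  · rw [hc, zero_smul]
    exact zero_mem _
  · exact Submodule.smul_mem _ _ (single_mem_supported ℂ 1 (hS j k rfl hj hc))

theorem spanGE_eq_supported (ε : ℤˣ) (n : ℤ) : spanGE ε n = supported ℂ ℂ {j | n ≤ j.1} := by
  rw [spanGE, supported_eq_span_single]
  congr 1
  ext x
  simp [eq_comm]

theorem spanLE_eq_supported (ε : ℤˣ) (n : ℤ) : spanLE ε n = supported ℂ ℂ {j | j.1 ≤ n} := by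
  rw [spanLE, supported_eq_span_single]
  congr 1
  ext x
  simp [eq_comm]

theorem odd_add_of_zpow_eq_neg {j n : ℤ} (hj : (-1 : ℤˣ) ^ j = ε) (hn : (-1 : ℤˣ) ^ n = -ε) :
    Odd (j + n) := by
  have h : (-1 : ℤˣ) ^ (j + n) = -1 := by rw [zpow_add, hj, hn, mul_neg, Int.units_mul_self]
  rw [neg_one_zpow_eq_ite] at h
  exact Int.not_even_iff_odd.1 fun he => absurd (if_pos he ▸ h) (by decide)

theorem invariant_spanGE {n : ℤ} (hn : (-1 : ℤˣ) ^ n = -ε) :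
    Invariant (Hop ε) (Eop ε n) (Fop ε n) (spanGE ε (n + 1)) := by
  rw [spanGE_eq_supported]
  refine ⟨fun _ => shiftOp_mem_supported ?_, fun _ => shiftOp_mem_supported ?_,
    fun _ => shiftOp_mem_supported ?_⟩ <;>
    intro j k hjk (hj : n + 1 ≤ j.1) hc <;> show n + 1 ≤ k.1
  · omega
  · omega
  · have hj' : j.1 ≠ n + 1 := fun h => hc (by rw [h]; push_cast; ring)
    obtain ⟨t, ht⟩ := odd_add_of_zpow_eq_neg j.2 hn
    omega

theorem invariant_spanLE {n : ℤ} (hn : (-1 : ℤˣ) ^ n = -ε) :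
    Invariant (Hop ε) (Eop ε n) (Fop ε n) (spanLE ε (-n - 1)) := by
  rw [spanLE_eq_supported]
  refine ⟨fun _ => shiftOp_mem_supported ?_, fun _ => shiftOp_mem_supported ?_,
    fun _ => shiftOp_mem_supported ?_⟩ <;>
    intro j k hjk (hj : j.1 ≤ -n - 1) hc <;> show k.1 ≤ -n - 1
  · omega
  · have hj' : j.1 ≠ -n - 1 := fun h => hc (by rw [h]; push_cast; ring)
    obtain ⟨t, ht⟩ := odd_add_of_zpow_eq_neg j.2 hn
    omega
  · omega

variable {ν : ℂ} {W : Submodule ℂ (V ε)} {j k : idx ε}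

theorem single_mem_of_Eop_mem (hW : ∀ x ∈ W, Eop ε ν x ∈ W) (hjk : k.1 = j.1 + 2)
    (hν : ν + j.1 + 1 ≠ 0) (hj : single j 1 ∈ W) : single k 1 ∈ W := by
  have := hW _ hj
  rwa [Eop_single ν hjk, W.smul_mem_iff (mul_ne_zero (by norm_num) hν)] at this

theorem single_mem_of_Fop_mem (hW : ∀ x ∈ W, Fop ε ν x ∈ W) (hjk : k.1 = j.1 + 2)
    (hν : ν - k.1 + 1 ≠ 0) (hk : single k 1 ∈ W) : single j 1 ∈ W := by
  have := hW _ hk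
  rwa [Fop_single ν hjk, W.smul_mem_iff (mul_ne_zero (by norm_num) hν)] at this

end Operators

theorem not_completelyReducible {ε : ℤˣ} {n : ℤ} (hn : (-1 : ℤˣ) ^ n = -ε) (hn0 : n ≠ 0) :
    ¬ CompletelyReducible (Hop ε) (Eop ε n) (Fop ε n) := by
  intro hcr
  obtain ⟨U, hU, hc⟩ := hcr _ (invariant_spanGE hn)
  rw [spanGE_eq_supported, eq_supported_of_Hop_invariant hU.1, isCompl_supported_iff] at hc
  let j : idx ε := ⟨n - 1, parity_pred hn⟩
  let k : idx ε := ⟨n + 1, parity_succ hn⟩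
  have hj : single j 1 ∈ U :=
    show j ∈ {j | single j 1 ∈ U} from hc.compl_eq ▸ fun (h : n + 1 ≤ n - 1) => by omega
  have hE : (n : ℂ) + j.1 + 1 = 2 * n := by push_cast [j]; ring
  have hk : single k 1 ∈ U := single_mem_of_Eop_mem hU.2.1 (show n + 1 = n - 1 + 2 by ring)
    (hE ▸ mul_ne_zero two_ne_zero (Int.cast_ne_zero.2 hn0)) hj
  exact Set.disjoint_left.1 hc.disjoint (show n + 1 ≤ k.1 from le_rfl) hk

section PiMinusOneZero

def oddIdx (m : ℤ) : idx (-1) := ⟨2 * m + 1, (odd_two_mul_add_one m).neg_one_zpow⟩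

theorem exists_oddIdx_eq (j : idx (-1)) : ∃ m, oddIdx m = j := by
  obtain ⟨m, hm⟩ := odd_add_of_zpow_eq_neg j.2 (by decide : (-1 : ℤˣ) ^ (0 : ℤ) = -(-1))
  exact ⟨m, Subtype.ext (by simp only [oddIdx]; omega)⟩

theorem isCompl_ge_one_le_neg_one : IsCompl {j : idx (-1) | 1 ≤ j.1} {j | j.1 ≤ -1} := by
  rw [show {j : idx (-1) | j.1 ≤ -1} = {j | 1 ≤ j.1}ᶜ from Set.ext fun j => ?_]
  · exact isCompl_compl
  obtain ⟨m, rfl⟩ := exists_oddIdx_eq j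
  simp only [oddIdx, Set.mem_compl_iff, Set.mem_ofPred_eq]
  omega

variable {W : Submodule ℂ (V (-1))}

theorem single_oddIdx_succ_mem_iff (hW : Invariant (Hop (-1)) (Eop (-1) 0) (Fop (-1) 0) W)
    {m : ℤ} (hm : m ≠ -1) :
    single (oddIdx (m + 1)) 1 ∈ W ↔ single (oddIdx m) 1 ∈ W := by
  have hjk : (oddIdx (m + 1)).1 = (oddIdx m).1 + 2 := by simp only [oddIdx]; ring
  refine ⟨single_mem_of_Fop_mem hW.2.2 hjk ?_, single_mem_of_Eop_mem hW.2.1 hjk ?_⟩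
  · simp only [oddIdx]
    exact_mod_cast (show (0 : ℤ) - (2 * (m + 1) + 1) + 1 ≠ 0 by omega)
  · simp only [oddIdx]
    exact_mod_cast (show (0 : ℤ) + (2 * m + 1) + 1 ≠ 0 by omega)

theorem single_oddIdx_mem_iff (hW : Invariant (Hop (-1)) (Eop (-1) 0) (Fop (-1) 0) W) (m : ℤ) :
    single (oddIdx m) 1 ∈ W ↔
      0 ≤ m ∧ single (oddIdx 0) 1 ∈ W ∨ m ≤ -1 ∧ single (oddIdx (-1)) 1 ∈ W := by
  obtain hm | hm : 0 ≤ m ∨ m ≤ -1 := by omega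
  · simp only [hm, true_and, show ¬ m ≤ -1 by omega, false_and, or_false]
    induction m, hm using Int.leInduction with
    | base => rfl
    | succ m hm ih => rw [single_oddIdx_succ_mem_iff hW (by omega), ih]
  · simp only [show ¬ 0 ≤ m by omega, false_and, hm, true_and, false_or]
    induction m, hm using Int.leInductionDown with
    | base => rfl
    | pred m hm ih => rw [← ih, ← single_oddIdx_succ_mem_iff hW (by omega), sub_add_cancel]

theorem eq_bot_or_eq_top_or_eq_spanGE_or_eq_spanLE
    (hW : Invariant (Hop (-1)) (Eop (-1) 0) (Fop (-1) 0) W) :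
    W = ⊥ ∨ W = ⊤ ∨ W = spanGE (-1) 1 ∨ W = spanLE (-1) (-1) := by
  have hS : {j | single j 1 ∈ W} = {j : idx (-1) | 1 ≤ j.1 ∧ single (oddIdx 0) 1 ∈ W ∨
      j.1 ≤ -1 ∧ single (oddIdx (-1)) 1 ∈ W} := by
    ext j
    obtain ⟨m, rfl⟩ := exists_oddIdx_eq j
    rw [Set.mem_ofPred_eq, Set.mem_ofPred_eq, single_oddIdx_mem_iff hW,
      show (oddIdx m).1 = 2 * m + 1 from rfl, show 0 ≤ m ↔ 1 ≤ 2 * m + 1 by omega,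
      show m ≤ -1 ↔ 2 * m + 1 ≤ -1 by omega]
  rw [eq_supported_of_Hop_invariant hW.1, hS, spanGE_eq_supported, spanLE_eq_supported]
  by_cases hpos : single (oddIdx 0) 1 ∈ W <;> by_cases hneg : single (oddIdx (-1)) 1 ∈ W <;>
    simp only [hpos, hneg, and_true, and_false, or_false, false_or, or_true, true_or]
  · refine Or.inr (Or.inl ?_)
    rw [Set.ofPred_or, supported_union]
    exact (isCompl_supported_iff.2 isCompl_ge_one_le_neg_one).sup_eq_top
  · exact Or.inl (by rw [Set.ofPred_false, supported_empty])

end PiMinusOneZero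

theorem invariant_spanGE_one :
    Invariant (Hop (-1)) (Eop (-1) 0) (Fop (-1) 0) (spanGE (-1) 1) := by
  simpa using invariant_spanGE (ε := -1) (n := 0) (by decide)

theorem invariant_spanLE_neg_one :
    Invariant (Hop (-1)) (Eop (-1) 0) (Fop (-1) 0) (spanLE (-1) (-1)) := by
  simpa using invariant_spanLE (ε := -1) (n := 0) (by decide)

theorem isCompl_spanGE_spanLE : IsCompl (spanGE (-1) 1) (spanLE (-1) (-1)) := by
  rw [spanGE_eq_supported, spanLE_eq_supported, isCompl_supported_iff]
  exact isCompl_ge_one_le_neg_one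

theorem spanGE_ne_bot : spanGE (-1) 1 ≠ ⊥ := by
  rw [spanGE_eq_supported]
  exact supported_ne_bot ⟨oddIdx 0, show (1 : ℤ) ≤ 2 * 0 + 1 by norm_num⟩

theorem spanLE_ne_bot : spanLE (-1) (-1) ≠ ⊥ := by
  rw [spanLE_eq_supported]
  exact supported_ne_bot ⟨oddIdx (-1), show (2 : ℤ) * -1 + 1 ≤ -1 by norm_num⟩

/-- For `n ∈ ℤ_{-ε}` (so `π(ε,n)` is reducible), `π(ε,n)` is completely
reducible iff `(ε,n) = (-1,0)`; moreover `V_{-1}` is the direct sum of the two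
subspaces `span{v_j : j ≥ 1}` and `span{v_j : j ≤ -1}`, each of which is an
irreducible submodule of `π(-1,0)`. -/
theorem principal_series_completely_reducible_iff (ε : ℤˣ) (n : ℤ)
    (hn : (-1 : ℤˣ) ^ n = -ε) :
    (CompletelyReducible (Hop ε) (Eop ε (n : ℂ)) (Fop ε (n : ℂ)) ↔ ε = -1 ∧ n = 0) ∧
    (IsCompl (spanGE (-1) 1) (spanLE (-1) (-1)) ∧
      IsIrreducibleSubmodule (Hop (-1)) (Eop (-1) 0) (Fop (-1) 0) (spanGE (-1) 1) ∧
      IsIrreducibleSubmodule (Hop (-1)) (Eop (-1) 0) (Fop (-1) 0) (spanLE (-1) (-1))) := by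
  have hcl (W) (hW) := eq_bot_or_eq_top_or_eq_spanGE_or_eq_spanLE (W := W) hW
  have hcl' (W) (hW) := (hcl W hW).imp_right (Or.imp_right Or.symm)
  refine ⟨⟨fun hcr => ?_, ?_⟩, isCompl_spanGE_spanLE,
    isIrreducibleSubmodule_of_forall_invariant hcl invariant_spanGE_one isCompl_spanGE_spanLE
      spanGE_ne_bot spanLE_ne_bot,
    isIrreducibleSubmodule_of_forall_invariant hcl' invariant_spanLE_neg_one
      isCompl_spanGE_spanLE.symm spanLE_ne_bot spanGE_ne_bot⟩
  · obtain rfl : n = 0 := by_contra fun hn0 => not_completelyReducible hn hn0 hcr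
    exact ⟨neg_eq_iff_eq_neg.1 hn.symm, rfl⟩
  · rintro ⟨rfl, rfl⟩
    simpa using completelyReducible_of_forall_invariant hcl invariant_spanGE_one
      invariant_spanLE_neg_one isCompl_spanGE_spanLE
end SL2Deform
end

section
/- For every ν ∈ ℂ with ν ∉ ℤ_{−ε}, the modules Π(ε,ν) and π(ε,ν) are isomorphic: there exists a linear automorphism S of V_ε which is diagonal in the standard basis (S v_j = c_j·v_j with c_j ∈ ℂ, c_j ≠ 0, for all j ∈ ℤ_ε) and satisfies S ∘ π(ε,ν)(X) = Π(ε,ν)(X) ∘ S for each X ∈ {H, E, F}. -/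
/-!
A diagonal operator `v_j ↦ c_j v_j` intertwines `π(ε,ν)` with `Π(ε,ν)` iff
`½(ν + j + 1) c_{j+2} = c_j f_{j+1}(ν)` and `½(ν - j + 1) c_{j-2} = c_j f_{1-j}(ν)` on `ℤ_ε`.
Since `f_{j+1}(ν) / ½(ν + j + 1) = |ν - j - 1|^{1/2} / |ν + j + 1|^{1/2}` is a positive real,
both are solved by `c_j = |Γ((ν + 1 + j)/2) Γ((ν + 1 - j)/2)|^{-1/2}`: the functional equation
`Γ(s + 1) = s Γ(s)` gives the ratio `c_{j+2} / c_j`, and `c` is even in `j`, which turns the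
second relation at `j` into the first one at `-j`. The Gamma function has no zeros, and the
poles `ν + 1 ± j ∈ -2ℕ` are excluded precisely by `ν ∉ ℤ_{-ε}`.
-/

namespace SL2Deform

section Operators

variable {ε : ℤˣ}

lemma shiftOp_single_s8 (s : ℤ) (hs : (-1 : ℤˣ) ^ s = 1) (a : ℤ → ℂ) (j : idx ε) (x : ℂ) :
    shiftOp ε s hs a (Finsupp.single j x) =
      Finsupp.single ⟨j.1 + s, parity_shift j.2 hs⟩ (x * a j.1) := by
  rw [shiftOp, Finsupp.lsum_single, LinearMap.toSpanSingleton_apply, Finsupp.smul_single,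
    smul_eq_mul]

lemma diagMap_single (c : idx ε → ℂ) (j : idx ε) (x : ℂ) :
    diagMap ε c (Finsupp.single j x) = Finsupp.single j (x * c j) := by
  rw [diagMap, Finsupp.lsum_single, LinearMap.toSpanSingleton_apply, Finsupp.smul_single,
    smul_eq_mul]

lemma diagMap_comp_diagMap (c d : idx ε → ℂ) :
    diagMap ε c ∘ₗ diagMap ε d = diagMap ε (c * d) := by
  refine Finsupp.lhom_ext fun j x => ?_
  simp only [LinearMap.comp_apply, diagMap_single, Pi.mul_apply, mul_assoc, mul_comm (d j)]

lemma diagMap_one : diagMap ε 1 = LinearMap.id :=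
  Finsupp.lhom_ext fun j x => by simp [diagMap_single]

lemma diagMap_bijective {c : idx ε → ℂ} (hc : ∀ j, c j ≠ 0) :
    Function.Bijective (diagMap ε c) := by
  have hinv : c * c⁻¹ = 1 := funext fun j => mul_inv_cancel₀ (hc j)
  refine Function.bijective_iff_has_inverse.mpr ⟨diagMap ε c⁻¹, fun x => ?_, fun x => ?_⟩
  · rw [← LinearMap.comp_apply, diagMap_comp_diagMap, mul_comm, hinv, diagMap_one,
      LinearMap.id_apply]
  · rw [← LinearMap.comp_apply, diagMap_comp_diagMap, hinv, diagMap_one, LinearMap.id_apply]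

lemma diagMap_comp_shiftOp {s : ℤ} {hs : (-1 : ℤˣ) ^ s = 1} {a b w : ℤ → ℂ}
    (h : ∀ j : ℤ, (-1 : ℤˣ) ^ j = ε → a j * w (j + s) = w j * b j) :
    diagMap ε (fun j => w j) ∘ₗ shiftOp ε s hs a = shiftOp ε s hs b ∘ₗ diagMap ε (fun j => w j) :=
  Finsupp.lhom_ext fun j x => by
    simp only [LinearMap.comp_apply, shiftOp_single_s8, diagMap_single]
    rw [mul_assoc, h j j.2, mul_assoc]

end Operators

lemma neg_one_zpow_eq_neg_of_odd_sub {ε : ℤˣ} {j m : ℤ} (hj : (-1 : ℤˣ) ^ j = ε)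
    (hodd : Odd (m - j)) : (-1 : ℤˣ) ^ m = -ε := by
  rw [← sub_add_cancel m j, zpow_add, hodd.neg_one_zpow, hj, neg_one_mul]

lemma ne_of_not_inZminus {ε : ℤˣ} {ν : ℂ} (hν : ¬ inZminus ε ν) {j m : ℤ}
    (hj : (-1 : ℤˣ) ^ j = ε) (hodd : Odd (m - j)) : ν ≠ m :=
  fun h => hν ⟨m, h, neg_one_zpow_eq_neg_of_odd_sub hj hodd⟩

section GammaWeight

open Complex (Gamma)

variable {ν : ℂ} {j : ℤ}

noncomputable def gammaProd (ν : ℂ) (j : ℤ) : ℂ :=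
  Gamma ((ν + 1 + j) / 2) * Gamma ((ν + 1 - j) / 2)

noncomputable def gammaWeight (ν : ℂ) (j : ℤ) : ℝ :=
  (Real.sqrt ‖gammaProd ν j‖)⁻¹

lemma gammaProd_neg (ν : ℂ) (j : ℤ) : gammaProd ν (-j) = gammaProd ν j := by
  rw [gammaProd, gammaProd, mul_comm]
  push_cast
  ring_nf

lemma gammaWeight_neg (ν : ℂ) (j : ℤ) : gammaWeight ν (-j) = gammaWeight ν j := by
  rw [gammaWeight, gammaWeight, gammaProd_neg]

lemma gammaProd_add_two_mul (hp : ν + (j + 1) ≠ 0) (hm : ν - (j + 1) ≠ 0) :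
    gammaProd ν (j + 2) * (ν - (j + 1)) = gammaProd ν j * (ν + (j + 1)) := by
  have ha : (ν + 1 + j) / 2 ≠ 0 :=
    div_ne_zero (by rwa [show ν + 1 + j = ν + (j + 1) by ring]) two_ne_zero
  have hb : (ν - 1 - j) / 2 ≠ 0 :=
    div_ne_zero (by rwa [show ν - 1 - j = ν - (j + 1) by ring]) two_ne_zero
  have hGa : Gamma ((ν + 1 + ↑(j + 2)) / 2) = (ν + 1 + j) / 2 * Gamma ((ν + 1 + j) / 2) := by
    rw [← Complex.Gamma_add_one _ ha]; push_cast; ring_nf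
  have hGb : Gamma ((ν + 1 - j) / 2) = (ν - 1 - j) / 2 * Gamma ((ν - 1 - j) / 2) := by
    rw [← Complex.Gamma_add_one _ hb]; ring_nf
  rw [gammaProd, gammaProd, hGa, hGb, show (ν + 1 - ↑(j + 2)) / 2 = (ν - 1 - j) / 2 by
    push_cast; ring]
  ring

lemma gammaWeight_add_two_mul (hp : ν + (j + 1) ≠ 0) (hm : ν - (j + 1) ≠ 0) :
    gammaWeight ν (j + 2) * ‖ν + (j + 1)‖ =
      gammaWeight ν j * Real.sqrt ‖ν ^ 2 - (j + 1 : ℂ) ^ 2‖ := by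
  set x := ‖gammaProd ν j‖
  set y := ‖gammaProd ν (j + 2)‖
  set p := ‖ν + (j + 1)‖
  set q := ‖ν - (j + 1)‖
  have hp' : 0 < p := norm_pos_iff.mpr hp
  have hq' : 0 < q := norm_pos_iff.mpr hm
  have hxy : y * q = x * p := by
    simp only [x, y, p, q, ← norm_mul, gammaProd_add_two_mul hp hm]
  have hsq : ‖ν ^ 2 - (j + 1 : ℂ) ^ 2‖ = p * q := by
    rw [sq_sub_sq, norm_mul]
  have hratio : p ^ 2 / y = p * q / x := by
    rcases eq_or_ne x 0 with hx | hx
    · have hy : y = 0 := by simpa [hx, hq'.ne'] using hxy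
      rw [hx, hy, div_zero, div_zero]
    · have hy : y ≠ 0 := by rintro hy; simp [hy, hx, hp'.ne'] at hxy
      rw [div_eq_div_iff hy hx]
      linear_combination (-p) * hxy
  rw [gammaWeight, gammaWeight, hsq]
  calc (√y)⁻¹ * p = √(p ^ 2 / y) := by
        rw [Real.sqrt_div' _ (norm_nonneg _), Real.sqrt_sq hp'.le, inv_mul_eq_div]
    _ = √(p * q / x) := by rw [hratio]
    _ = (√x)⁻¹ * √(p * q) := by rw [Real.sqrt_div' _ (norm_nonneg _), inv_mul_eq_div]

end GammaWeight

section Intertwining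

variable {ε : ℤˣ} {ν : ℂ} {j : ℤ}

lemma gammaWeight_ne_zero (hν : ¬ inZminus ε ν) (hj : (-1 : ℤˣ) ^ j = ε) :
    gammaWeight ν j ≠ 0 := by
  have h₁ : ∀ n : ℕ, (ν + 1 + j) / 2 ≠ -n := fun n h =>
    ne_of_not_inZminus hν hj (m := -2 * n - 1 - j) ⟨-n - j - 1, by ring⟩
      (by push_cast; linear_combination 2 * h)
  have h₂ : ∀ n : ℕ, (ν + 1 - j) / 2 ≠ -n := fun n h =>
    ne_of_not_inZminus hν hj (m := -2 * n - 1 + j) ⟨-n - 1, by ring⟩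
      (by push_cast; linear_combination 2 * h)
  exact inv_ne_zero <| Real.sqrt_ne_zero'.mpr <| norm_pos_iff.mpr <|
    mul_ne_zero (Complex.Gamma_ne_zero h₁) (Complex.Gamma_ne_zero h₂)

lemma half_mul_gammaWeight_add_two (hν : ¬ inZminus ε ν) (hj : (-1 : ℤˣ) ^ j = ε) :
    (1 / 2 : ℂ) * (ν + j + 1) * gammaWeight ν (j + 2) = gammaWeight ν j * fm (j + 1) ν := by
  have hp : ν + (j + 1) ≠ 0 := fun h =>
    ne_of_not_inZminus hν hj (m := -(j + 1)) ⟨-j - 1, by ring⟩ (by push_cast; linear_combination h)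
  have hm : ν - (j + 1) ≠ 0 := fun h =>
    ne_of_not_inZminus hν hj (m := j + 1) ⟨0, by ring⟩ (by push_cast; linear_combination h)
  have hnorm : (‖ν + (j + 1)‖ : ℂ) ≠ 0 := Complex.ofReal_ne_zero.mpr (norm_ne_zero_iff.mpr hp)
  have key := congrArg (fun r : ℝ => (r : ℂ)) (gammaWeight_add_two_mul hp hm)
  rw [fm, if_neg (by push_cast; exact fun h => hp (by rw [h]; ring))]
  push_cast at key ⊢
  field_simp
  linear_combination (ν + (j + 1)) * key

lemma half_mul_gammaWeight_sub_two (hν : ¬ inZminus ε ν) (hj : (-1 : ℤˣ) ^ j = ε) :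
    (1 / 2 : ℂ) * (ν - j + 1) * gammaWeight ν (j + -2) = gammaWeight ν j * fm (1 - j) ν := by
  have h := half_mul_gammaWeight_add_two hν (j := -j)
    (by rw [zpow_neg, hj, Int.units_inv_eq_self])
  rw [show -j + 2 = -(j + -2) by ring, show -j + 1 = 1 - j by ring, gammaWeight_neg,
    gammaWeight_neg] at h
  push_cast at h
  linear_combination h

end Intertwining

/-- For `ν ∉ ℤ_{-ε}`, the modules `Π(ε,ν)` and `π(ε,ν)` are isomorphic
via a linear automorphism `S` of `V ε` which is diagonal in the standard basis
(`S v_j = c_j • v_j`, `c_j ≠ 0`) and satisfies `S ∘ π(X) = Π(X) ∘ S` for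
`X ∈ {H, E, F}`. -/
theorem deformed_iso_principal_series (ε : ℤˣ) (ν : ℂ) (hν : ¬ inZminus ε ν) :
    ∃ c : idx ε → ℂ, (∀ j, c j ≠ 0) ∧ Function.Bijective (diagMap ε c) ∧
      diagMap ε c ∘ₗ Hop ε = Hop ε ∘ₗ diagMap ε c ∧
      diagMap ε c ∘ₗ Eop ε ν = PEop ε ν ∘ₗ diagMap ε c ∧
      diagMap ε c ∘ₗ Fop ε ν = PFop ε ν ∘ₗ diagMap ε c := by
  set w : ℤ → ℂ := fun j => gammaWeight ν j
  have hw : ∀ j : idx ε, w j ≠ 0 := fun j =>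
    Complex.ofReal_ne_zero.mpr (gammaWeight_ne_zero hν j.2)
  refine ⟨fun j => w j, hw, diagMap_bijective hw, ?_, ?_, ?_⟩
  · exact diagMap_comp_shiftOp (w := w) fun j _ => by rw [add_zero, mul_comm]
  · exact diagMap_comp_shiftOp (w := w) fun j hj => half_mul_gammaWeight_add_two hν hj
  · exact diagMap_comp_shiftOp (w := w) fun j hj => half_mul_gammaWeight_sub_two hν hj

end SL2Deform
end

section
/- Let n ∈ ℤ_{−ε} with n ≠ 0 (so that π(ε,n) is indecomposable), and let ⟨·,·⟩ be any invariant Hermitian form on π(ε,n). Then ⟨·,·⟩ vanishes identically on every irreducible submodule of π(ε,n). Concretely: if n > 0 then ⟨v,w⟩ = 0 for all v, w ∈ span{v_j : j ≥ n+1} and for all v, w ∈ span{v_j : j ≤ −(n+1)}; if n < 0 then ⟨v,w⟩ = 0 for all v, w ∈ span{v_j : |j| ≤ −n−1}. -/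
open Finsupp

theorem Int.le_induction_two {P : ℤ → Prop} {m M : ℤ} (hm : P m)
    (hstep : ∀ k, m ≤ k → k + 2 ≤ M → P k → P (k + 2))
    {k : ℤ} (hmk : m ≤ k) (hkM : k ≤ M) (heven : Even (k - m)) : P k := by
  obtain ⟨c, hc⟩ := heven
  lift c to ℕ using by omega
  have key : ∀ t : ℕ, m + 2 * t ≤ M → P (m + 2 * t) := by
    intro t
    induction t with
    | zero => exact fun _ => by simpa using hm
    | succ t ih =>
      intro ht
      push_cast at ht ⊢
      simpa [mul_add, ← add_assoc] using hstep _ (by omega) (by omega) (ih (by omega))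
  simpa [show m + 2 * (c : ℤ) = k by omega] using key c (by omega)

theorem Finsupp.exists_single_mem_of_diagonal {α K : Type*} [Field K]
    {T : (α →₀ K) →ₗ[K] α →₀ K} {μ : α → K} (hμ : Function.Injective μ)
    (hT : ∀ x i, T x i = μ i * x i) {W : Submodule K (α →₀ K)} (hW : ∀ x ∈ W, T x ∈ W)
    {x : α →₀ K} (hx : x ∈ W) (hx0 : x ≠ 0) : ∃ i, single i 1 ∈ W := by
  induction hcard : x.support.card using Nat.strong_induction_on generalizing x with
  | _ N ih =>
  obtain ⟨j, hj⟩ := support_nonempty_iff.2 hx0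
  set y := T x - μ j • x with hy
  have hyi : ∀ i, y i = (μ i - μ j) * x i := fun i => by simp [hy, hT]; ring
  by_cases hy0 : y = 0
  · have hxj : x.support ⊆ {j} := fun i hi => by
      have := hyi i
      rw [hy0, coe_zero, Pi.zero_apply, eq_comm, mul_eq_zero, sub_eq_zero] at this
      exact Finset.mem_singleton.2 (hμ (this.resolve_right (mem_support_iff.1 hi)))
    obtain ⟨a, rfl⟩ := support_subset_singleton'.1 hxj
    have ha : a ≠ 0 := by rintro rfl; simp at hx0
    exact ⟨j, by simpa [smul_single, ha] using W.smul_mem a⁻¹ hx⟩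
  · refine ih y.support.card ?_ (W.sub_mem (hW x hx) (W.smul_mem _ hx)) hy0 rfl
    rw [← hcard]
    refine Finset.card_lt_card ((Finset.ssubset_iff_of_subset fun i hi => ?_).2 ⟨j, hj, ?_⟩)
    · rw [mem_support_iff, hyi] at hi
      exact mem_support_iff.2 (right_ne_zero_of_mul hi)
    · simp [hyi]

namespace SL2Deform

section Forms

variable {M : Type*} [AddCommGroup M] [Module ℂ M] {A B C : M →ₗ[ℂ] M}

lemma Invariant.inf {U W : Submodule ℂ M} (hU : Invariant A B C U) (hW : Invariant A B C W) :
    Invariant A B C (U ⊓ W) :=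
  ⟨fun x hx => ⟨hU.1 x hx.1, hW.1 x hx.2⟩, fun x hx => ⟨hU.2.1 x hx.1, hW.2.1 x hx.2⟩,
    fun x hx => ⟨hU.2.2 x hx.1, hW.2.2 x hx.2⟩⟩

namespace IsInvHermForm

variable {Φ : M → M → ℂ}

lemma smul_right (h : IsInvHermForm A B C Φ) (a : ℂ) (v w : M) :
    Φ v (a • w) = starRingEnd ℂ a * Φ v w := by
  rw [h.conj_symm, h.smul_left, map_mul, ← h.conj_symm]

lemma zero_left (h : IsInvHermForm A B C Φ) (w : M) : Φ 0 w = 0 := by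
  simpa using h.smul_left 0 0 w

def leftLinear (h : IsInvHermForm A B C Φ) (w : M) : M →ₗ[ℂ] ℂ where
  toFun v := Φ v w
  map_add' u v := h.add_left u v w
  map_smul' a v := h.smul_left a v w

def radical (h : IsInvHermForm A B C Φ) : Submodule ℂ M :=
  ⨅ w, LinearMap.ker (h.leftLinear w)

lemma mem_radical (h : IsInvHermForm A B C Φ) {x : M} : x ∈ h.radical ↔ ∀ w, Φ x w = 0 := by
  simp [radical, leftLinear]

lemma invariant_radical (h : IsInvHermForm A B C Φ) : Invariant A B C h.radical := by
  refine ⟨fun x hx => ?_, fun x hx => ?_, fun x hx => ?_⟩ <;>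
    rw [h.mem_radical] at hx ⊢ <;> intro w
  · rw [h.inv_A, hx]
  · linear_combination h.inv_BC x w - hx (C w)
  · linear_combination h.inv_CB x w - hx (B w)

lemma le_radical_of_isIrreducibleSubmodule (h : IsInvHermForm A B C Φ) {W : Submodule ℂ M}
    (hW : IsIrreducibleSubmodule A B C W) (hWr : W ⊓ h.radical ≠ ⊥) : W ≤ h.radical :=
  inf_eq_left.1 ((hW.2.2 _ (hW.1.inf h.invariant_radical) inf_le_left).resolve_left hWr)

end IsInvHermForm

end Forms

section PrincipalSeries

variable {ε : ℤˣ}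

lemma even_sub_succ_of_parity {n k : ℤ} (hn : (-1 : ℤˣ) ^ n = -ε) (hk : (-1 : ℤˣ) ^ k = ε) :
    Even (k - (n + 1)) :=
  (Int.negOnePow_eq_iff k (n + 1)).1 (hk.trans (parity_succ hn).symm)

lemma parity_neg {k : ℤ} (hk : (-1 : ℤˣ) ^ k = ε) : (-1 : ℤˣ) ^ (-k) = ε :=
  (Int.negOnePow_neg k).trans hk

/-- `v_k`, extended by `0` to the indices `k ∉ ℤ_ε`; this makes the identities below
parity-free. -/
noncomputable def basisVec (ε : ℤˣ) (k : ℤ) : V ε :=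
  if h : (-1 : ℤˣ) ^ k = ε then bv ε k h else 0

lemma basisVec_of_parity (j : idx ε) : basisVec ε j.1 = single j 1 := dif_pos j.2

lemma basisVec_ne_zero {k : ℤ} (hk : (-1 : ℤˣ) ^ k = ε) : basisVec ε k ≠ 0 := by
  simp [basisVec, hk, bv]

lemma shiftOp_basisVec (s : ℤ) (hs : (-1 : ℤˣ) ^ s = 1) (c : ℤ → ℂ) (k : ℤ) :
    shiftOp ε s hs c (basisVec ε k) = c k • basisVec ε (k + s) := by
  by_cases hk : (-1 : ℤˣ) ^ k = ε
  · simp [basisVec, hk, bv, shiftOp, parity_shift hk hs]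
  · have hks : ¬ (-1 : ℤˣ) ^ (k + s) = ε := by rwa [zpow_add, hs, mul_one]
    simp [basisVec, hk, hks]

lemma Hop_basisVec (k : ℤ) : Hop ε (basisVec ε k) = (k : ℂ) • basisVec ε k := by
  rw [Hop, shiftOp_basisVec, add_zero]

lemma Eop_basisVec (ν : ℂ) (k : ℤ) :
    Eop ε ν (basisVec ε k) = (1 / 2 * (ν + k + 1)) • basisVec ε (k + 2) :=
  shiftOp_basisVec _ _ _ k

lemma Fop_basisVec (ν : ℂ) (k : ℤ) :
    Fop ε ν (basisVec ε k) = (1 / 2 * (ν - k + 1)) • basisVec ε (k - 2) :=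
  shiftOp_basisVec _ _ _ k

lemma Hop_apply (x : V ε) (i : idx ε) : Hop ε x i = i.1 * x i := by
  induction x using Finsupp.induction_linear with
  | zero => simp
  | add x y hx hy => simp [hx, hy, mul_add]
  | single j a =>
    rw [← smul_single_one, map_smul, ← basisVec_of_parity, Hop_basisVec, basisVec_of_parity]
    by_cases hij : j = i
    · subst hij; simp [mul_comm]
    · simp [hij]

/-- The indices `k` with `v_k` in the socle of `π(ε,n)`: the two discrete series
`span{v_k : k ≥ n+1}`, `span{v_k : k ≤ -(n+1)}` for `n > 0`, the finite-dimensional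
submodule `span{v_k : |k| ≤ -n-1}` for `n < 0`. -/
def IsSocleIndex (n k : ℤ) : Prop :=
  (0 < n ∧ (n + 1 ≤ k ∨ k ≤ -(n + 1))) ∨ (n < 0 ∧ n + 1 ≤ k ∧ k ≤ -n - 1)

namespace IsInvHermForm

variable {Φ : V ε → V ε → ℂ}

lemma apply_basisVec_of_ne {B C : V ε →ₗ[ℂ] V ε} (h : IsInvHermForm (Hop ε) B C Φ) {i j : ℤ}
    (hij : i ≠ j) : Φ (basisVec ε i) (basisVec ε j) = 0 := by
  have hH := h.inv_A (basisVec ε i) (basisVec ε j)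
  rw [Hop_basisVec, Hop_basisVec, h.smul_left, h.smul_right, map_intCast] at hH
  by_contra h0
  exact hij (by exact_mod_cast mul_right_cancel₀ h0 hH)

lemma basisVec_mem_radical_of_apply_self {B C : V ε →ₗ[ℂ] V ε}
    (h : IsInvHermForm (Hop ε) B C Φ) {k : ℤ} (hk : Φ (basisVec ε k) (basisVec ε k) = 0) :
    basisVec ε k ∈ h.radical := by
  suffices h.leftLinear (basisVec ε k) = 0 from
    h.mem_radical.2 fun w => by
      rw [h.conj_symm w, show Φ w _ = 0 from LinearMap.congr_fun this w, map_zero]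
  refine lhom_ext fun i a => ?_
  show Φ (single i a) (basisVec ε k) = 0
  rw [← smul_single_one, ← basisVec_of_parity, h.smul_left]
  rcases eq_or_ne i.1 k with rfl | hik
  · rw [hk, mul_zero]
  · rw [h.apply_basisVec_of_ne hik, mul_zero]

variable {n : ℤ}

lemma basisVec_recurrence (h : IsInvHermForm (Hop ε) (Eop ε n) (Fop ε n) Φ) (k : ℤ) :
    ((n : ℂ) + k + 1) * Φ (basisVec ε (k + 2)) (basisVec ε (k + 2)) =
      ((k : ℂ) + 1 - n) * Φ (basisVec ε k) (basisVec ε k) := by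
  have hEF := h.inv_BC (basisVec ε k) (basisVec ε (k + 2))
  rw [Eop_basisVec, Fop_basisVec, add_sub_cancel_right, h.smul_left, h.smul_right] at hEF
  simp only [map_mul, map_add, map_sub, map_one, map_div₀, map_ofNat, map_intCast] at hEF
  push_cast at hEF
  linear_combination 2 * hEF

lemma apply_basisVec_add_two_eq_zero (h : IsInvHermForm (Hop ε) (Eop ε n) (Fop ε n) Φ) {k : ℤ}
    (hk : Φ (basisVec ε k) (basisVec ε k) = 0) (hne : n + k + 1 ≠ 0) :
    Φ (basisVec ε (k + 2)) (basisVec ε (k + 2)) = 0 := by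
  have hrec := h.basisVec_recurrence k
  rw [hk, mul_zero] at hrec
  exact (mul_eq_zero.1 hrec).resolve_left (by exact_mod_cast hne)

lemma apply_basisVec_eq_zero_of_add_two (h : IsInvHermForm (Hop ε) (Eop ε n) (Fop ε n) Φ)
    {k : ℤ} (hk : Φ (basisVec ε (k + 2)) (basisVec ε (k + 2)) = 0) (hne : k + 1 - n ≠ 0) :
    Φ (basisVec ε k) (basisVec ε k) = 0 := by
  have hrec := h.basisVec_recurrence k
  rw [hk, mul_zero, eq_comm] at hrec
  exact (mul_eq_zero.1 hrec).resolve_left (by exact_mod_cast hne)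

lemma apply_basisVec_succ_self (h : IsInvHermForm (Hop ε) (Eop ε n) (Fop ε n) Φ)
    (hne : n ≠ 0) : Φ (basisVec ε (n + 1)) (basisVec ε (n + 1)) = 0 := by
  have hrec := h.basisVec_recurrence (n - 1)
  rw [show n - 1 + 2 = n + 1 by ring] at hrec
  have h2n : (2 * n : ℂ) ≠ 0 := by exact_mod_cast mul_ne_zero two_ne_zero hne
  refine (mul_eq_zero.1 (?_ : (2 * n : ℂ) * _ = 0)).resolve_left h2n
  push_cast at hrec
  linear_combination hrec

lemma apply_basisVec_neg_succ_self (h : IsInvHermForm (Hop ε) (Eop ε n) (Fop ε n) Φ)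
    (hne : n ≠ 0) : Φ (basisVec ε (-(n + 1))) (basisVec ε (-(n + 1))) = 0 := by
  have hrec := h.basisVec_recurrence (-(n + 1))
  have h2n : (2 * n : ℂ) ≠ 0 := by exact_mod_cast mul_ne_zero two_ne_zero hne
  refine (mul_eq_zero.1 (?_ : (2 * n : ℂ) * _ = 0)).resolve_left h2n
  push_cast at hrec
  linear_combination hrec

lemma apply_basisVec_self_eq_zero (h : IsInvHermForm (Hop ε) (Eop ε n) (Fop ε n) Φ)
    (hn : (-1 : ℤˣ) ^ n = -ε) (hne : n ≠ 0) {k : ℤ} (hk : IsSocleIndex n k) :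
    Φ (basisVec ε k) (basisVec ε k) = 0 := by
  by_cases hkε : (-1 : ℤˣ) ^ k = ε
  swap
  · rw [basisVec, dif_neg hkε, h.zero_left]
  have hup := even_sub_succ_of_parity hn hkε
  have hdown := even_sub_succ_of_parity hn (parity_neg hkε)
  rcases hk with ⟨hpos, hk | hk⟩ | ⟨hneg, hk, hk'⟩
  · exact Int.le_induction_two (P := fun j => Φ (basisVec ε j) (basisVec ε j) = 0)
      (h.apply_basisVec_succ_self hne)
      (fun j hj _ hd => h.apply_basisVec_add_two_eq_zero hd (by omega)) hk le_rfl hup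
  · have hneg := Int.le_induction_two (P := fun j => Φ (basisVec ε (-j)) (basisVec ε (-j)) = 0)
      (h.apply_basisVec_neg_succ_self hne)
      (fun j hj _ hd => h.apply_basisVec_eq_zero_of_add_two (k := -(j + 2))
        (by rwa [show -(j + 2) + 2 = -j by ring]) (by omega))
      (by omega : n + 1 ≤ -k) le_rfl hdown
    rwa [neg_neg] at hneg
  · exact Int.le_induction_two (P := fun j => Φ (basisVec ε j) (basisVec ε j) = 0)
      (h.apply_basisVec_succ_self hne)
      (fun j _ hjk hd => h.apply_basisVec_add_two_eq_zero hd (by omega)) hk hk' hup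

lemma basisVec_mem_radical (h : IsInvHermForm (Hop ε) (Eop ε n) (Fop ε n) Φ)
    (hn : (-1 : ℤˣ) ^ n = -ε) (hne : n ≠ 0) {k : ℤ} (hk : IsSocleIndex n k) :
    basisVec ε k ∈ h.radical :=
  h.basisVec_mem_radical_of_apply_self (h.apply_basisVec_self_eq_zero hn hne hk)

end IsInvHermForm

section Climb

variable {n : ℤ} {W : Submodule ℂ (V ε)}

lemma basisVec_add_two_mem (hE : ∀ x ∈ W, Eop ε n x ∈ W) {k : ℤ} (hk : basisVec ε k ∈ W)
    (hne : n + k + 1 ≠ 0) : basisVec ε (k + 2) ∈ W := by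
  have hc : (1 / 2 * ((n : ℂ) + k + 1)) ≠ 0 :=
    mul_ne_zero (by norm_num) (by exact_mod_cast hne)
  exact (W.smul_mem_iff hc).1 (Eop_basisVec (n : ℂ) k ▸ hE _ hk)

lemma basisVec_sub_two_mem (hF : ∀ x ∈ W, Fop ε n x ∈ W) {k : ℤ} (hk : basisVec ε k ∈ W)
    (hne : n - k + 1 ≠ 0) : basisVec ε (k - 2) ∈ W := by
  have hc : (1 / 2 * ((n : ℂ) - k + 1)) ≠ 0 :=
    mul_ne_zero (by norm_num) (by exact_mod_cast hne)
  exact (W.smul_mem_iff hc).1 (Fop_basisVec (n : ℂ) k ▸ hF _ hk)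

lemma exists_socle_basisVec_mem (hn : (-1 : ℤˣ) ^ n = -ε) (hne : n ≠ 0)
    (hW : Invariant (Hop ε) (Eop ε n) (Fop ε n) W) {k : ℤ} (hkε : (-1 : ℤˣ) ^ k = ε)
    (hk : basisVec ε k ∈ W) :
    ∃ k', (-1 : ℤˣ) ^ k' = ε ∧ IsSocleIndex n k' ∧ basisVec ε k' ∈ W := by
  obtain ⟨-, hE, hF⟩ := hW
  have hup := even_sub_succ_of_parity hn hkε
  have hdown := even_sub_succ_of_parity hn (parity_neg hkε)
  have climb_up (hkn : k ≤ n + 1) (hstep : ∀ j, k ≤ j → j + 2 ≤ n + 1 → n + j + 1 ≠ 0) :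
      basisVec ε (n + 1) ∈ W :=
    Int.le_induction_two (P := fun j => basisVec ε j ∈ W) hk
      (fun j hj hjn hjW => basisVec_add_two_mem hE hjW (hstep j hj hjn)) hkn le_rfl
      (by simpa using hup.neg)
  have climb_down (hkn : -(n + 1) ≤ k) (hstep : ∀ j, -k ≤ j → j + 2 ≤ n + 1 → n + j + 1 ≠ 0) :
      basisVec ε (-(n + 1)) ∈ W :=
    Int.le_induction_two (P := fun j => basisVec ε (-j) ∈ W) (by rwa [neg_neg])
      (fun j hj hjn hjW => by
        have hmem := basisVec_sub_two_mem hF hjW (by have := hstep j hj hjn; omega)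
        rwa [show -j - 2 = -(j + 2) by ring] at hmem)
      (by omega) le_rfl (by simpa using hdown.neg)
  -- the parities rule out `k = ±n`
  obtain ⟨a, ha⟩ := hup
  obtain ⟨b, hb⟩ := hdown
  by_cases hsoc : IsSocleIndex n k
  · exact ⟨k, hkε, hsoc, hk⟩
  unfold IsSocleIndex at hsoc
  rcases lt_or_gt_of_ne hne with hneg | hpos
  · rcases le_or_gt k (n + 1) with hkn | hkn
    · exact ⟨n + 1, parity_succ hn, by unfold IsSocleIndex; omega,
        climb_up hkn fun j _ hj => by omega⟩
    · exact ⟨-(n + 1), parity_neg (parity_succ hn), by unfold IsSocleIndex; omega,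
        climb_down (by omega) fun j _ hj => by omega⟩
  · exact ⟨n + 1, parity_succ hn, by unfold IsSocleIndex; omega,
      climb_up (by omega) fun j hj _ => by omega⟩

end Climb

end PrincipalSeries

/-- For `n ∈ ℤ_{-ε}`, `n ≠ 0` (so `π(ε,n)` is indecomposable), any
invariant Hermitian form on `π(ε,n)` vanishes identically on every irreducible
submodule; concretely, for `n > 0` it vanishes on `span{v_j : j ≥ n+1}` and on
`span{v_j : j ≤ -(n+1)}`, and for `n < 0` on `span{v_j : |j| ≤ -n-1}`. -/
theorem principal_series_herm_form_radical (ε : ℤˣ) (n : ℤ)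
    (hn : (-1 : ℤˣ) ^ n = -ε) (hne : n ≠ 0)
    (Φ : V ε → V ε → ℂ)
    (hΦ : IsInvHermForm (Hop ε) (Eop ε (n : ℂ)) (Fop ε (n : ℂ)) Φ) :
    (∀ W : Submodule ℂ (V ε),
      IsIrreducibleSubmodule (Hop ε) (Eop ε (n : ℂ)) (Fop ε (n : ℂ)) W →
        ∀ v ∈ W, ∀ w ∈ W, Φ v w = 0) ∧
    (0 < n →
      (∀ v ∈ spanGE ε (n + 1), ∀ w ∈ spanGE ε (n + 1), Φ v w = 0) ∧
      (∀ v ∈ spanLE ε (-(n + 1)), ∀ w ∈ spanLE ε (-(n + 1)), Φ v w = 0)) ∧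
    (n < 0 →
      ∀ v ∈ spanAbsLE ε (-n - 1), ∀ w ∈ spanAbsLE ε (-n - 1), Φ v w = 0) := by
  have hspan (p : idx ε → Prop) (hp : ∀ j, p j → IsSocleIndex n j.1) :
      ∀ v ∈ Submodule.span ℂ {x | ∃ j, p j ∧ x = single j 1}, ∀ w, Φ v w = 0 := by
    refine fun v hv => hΦ.mem_radical.1 (Submodule.span_le.2 ?_ hv)
    rintro _ ⟨j, hj, rfl⟩
    exact basisVec_of_parity j ▸ hΦ.basisVec_mem_radical hn hne (hp j hj)
  refine ⟨fun W hW v hv w _ => ?_,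
    fun hpos => ⟨fun v hv w _ => hspan _ (fun j hj => Or.inl ⟨hpos, Or.inl hj⟩) v hv w,
      fun v hv w _ => hspan _ (fun j hj => Or.inl ⟨hpos, Or.inr hj⟩) v hv w⟩,
    fun hneg v hv w _ => hspan _ (fun j hj => Or.inr ⟨hneg, by grind [abs_le]⟩) v hv w⟩
  obtain ⟨x, hxW, hx0⟩ := (Submodule.ne_bot_iff W).1 hW.2.1
  obtain ⟨j, hj⟩ := exists_single_mem_of_diagonal (T := Hop ε) (fun i i' h => Subtype.ext
    (by exact_mod_cast h)) Hop_apply hW.1.1 hxW hx0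
  obtain ⟨k, hkε, hk, hkW⟩ :=
    exists_socle_basisVec_mem hn hne hW.1 j.2 (by rwa [basisVec_of_parity])
  have hrad : W ⊓ hΦ.radical ≠ ⊥ := (Submodule.ne_bot_iff _).2
    ⟨_, ⟨hkW, hΦ.basisVec_mem_radical hn hne hk⟩, basisVec_ne_zero hkε⟩
  exact hΦ.mem_radical.1 (hΦ.le_radical_of_isIrreducibleSubmodule hW hrad hv) w

end SL2Deform
end
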